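/- Let p ∈ ℂ[z,w] be a polynomial of degree at most (n,m) with p(z,w) ≠ 0 whenever |z| ≤ 1 and |w| ≤ 1, and let ←p(z,w) = zⁿwᵐ·conj(p(1/conj(z), 1/conj(w))) be its reverse polynomial. Then for every integer k < n and every integer l ∈ ℤ: (1/4π²)·∫∫_{[−π,π]²} ←p(e^{iθ}, e^{iφ})·e^{−ikθ}·e^{−ilφ} / |p(e^{iθ}, e^{iφ})|² dθ dφ = 0. -/

import Mathlib

/-!
On the torus `1 / conj z = z`, so `←p / |p|² = zⁿwᵐ / p`. After multiplying by `e^{-ikθ}`,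
the integrand in `θ` is `e^{i(n-k)θ}` times a function of `z = e^{iθ}` that is holomorphic
on the closed unit disc, because `p` is stable. Since `n - k ≥ 1`, Cauchy's theorem kills
every `θ`-integral, and Fubini lets us integrate in `θ` first.
-/

open MvPolynomial

open Complex ComplexConjugate Metric Set Real MeasureTheory Interval

theorem differentiable_eval_vecCons (p : MvPolynomial (Fin 2) ℂ) (w : ℂ) :
    Differentiable ℂ fun z : ℂ => eval ![z, w] p := fun z =>
  (AnalyticOnNhd.eval_mvPolynomial p _ trivial).differentiableAt.comp z
    (differentiableAt_pi.2 fun i => by fin_cases i <;> simp)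

theorem integral_exp_mul_I_mul_comp_exp_eq_zero {f : ℂ → ℂ}
    (hf : DifferentiableOn ℂ f (closedBall 0 1)) :
    ∫ θ : ℝ in (-π)..π, exp (θ * I) * f (exp (θ * I)) = 0 := by
  have hcirc : (∮ z in C(0, 1), f z) = 0 :=
    (hf.diffContOnCl_ball subset_rfl).circleIntegral_eq_zero zero_le_one
  have hper : Function.Periodic (fun θ : ℝ => exp (θ * I) * f (exp (θ * I))) (2 * π) := by
    simpa [circleMap] using fun θ => congrArg (fun z => z * f z) (periodic_circleMap 0 1 θ)
  have hshift : ∫ θ : ℝ in (-π)..π, exp (θ * I) * f (exp (θ * I)) =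
      ∫ θ : ℝ in 0..2 * π, exp (θ * I) * f (exp (θ * I)) := by
    simpa [show -π + 2 * π = π by ring] using hper.intervalIntegral_add_eq (-π) 0
  have hcirc_eq : (∮ z in C(0, 1), f z) =
      I * ∫ θ : ℝ in 0..2 * π, exp (θ * I) * f (exp (θ * I)) := by
    rw [circleIntegral, ← intervalIntegral.integral_const_mul]
    simp only [deriv_circleMap, circleMap, ofReal_one, one_mul, zero_add, smul_eq_mul]
    exact intervalIntegral.integral_congr fun θ _ => by ring
  rw [hshift]
  exact (mul_eq_zero.1 (hcirc_eq ▸ hcirc)).resolve_left I_ne_zero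

theorem integral_exp_nat_mul_mul_comp_exp_eq_zero {f : ℂ → ℂ}
    (hf : DifferentiableOn ℂ f (closedBall 0 1)) {j : ℕ} (hj : 0 < j) :
    ∫ θ : ℝ in (-π)..π, exp (j * θ * I) * f (exp (θ * I)) = 0 := by
  have hg : DifferentiableOn ℂ (fun z => z ^ (j - 1) * f z) (closedBall 0 1) :=
    (differentiableOn_pow _).mul hf
  rw [← integral_exp_mul_I_mul_comp_exp_eq_zero hg]
  refine intervalIntegral.integral_congr fun θ _ => ?_
  rw [← mul_assoc, ← pow_succ', Nat.sub_add_cancel hj, ← Complex.exp_nat_mul, mul_assoc]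

theorem one_div_conj_of_norm_eq_one {z : ℂ} (hz : ‖z‖ = 1) : 1 / conj z = z := by
  rw [one_div, inv_eq_conj (by rwa [norm_conj]), conj_conj]

theorem eval_reverse_div_sq_norm {n m : ℕ} {p revp : MvPolynomial (Fin 2) ℂ}
    (hrev : ∀ z w : ℂ, z ≠ 0 → w ≠ 0 →
      eval ![z, w] revp = z ^ n * w ^ m * conj (eval ![1 / conj z, 1 / conj w] p))
    {z w : ℂ} (hz : ‖z‖ = 1) (hw : ‖w‖ = 1) :
    eval ![z, w] revp / (‖eval ![z, w] p‖ : ℂ) ^ 2 = z ^ n * w ^ m / eval ![z, w] p := by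
  rw [hrev z w (norm_ne_zero_iff.1 (by simp [hz])) (norm_ne_zero_iff.1 (by simp [hw])),
    one_div_conj_of_norm_eq_one hz, one_div_conj_of_norm_eq_one hw, mul_div_assoc,
    div_eq_mul_inv _ (eval _ p), RCLike.inv_def, ← Complex.ofReal_pow]
  simp [div_eq_mul_inv]

theorem exp_mul_I_pow_mul_exp_neg_mul_I {n j : ℕ} {k : ℤ} (hjk : (j : ℤ) = n - k) (θ : ℝ) :
    exp (θ * I) ^ n * exp (-k * θ * I) = exp (j * θ * I) := by
  have hjk' : (j : ℂ) = n - k := by exact_mod_cast hjk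
  rw [← Complex.exp_nat_mul, ← Complex.exp_add]
  congr 1
  linear_combination (-(θ * I)) * hjk'

theorem continuous_eval_exp_mul_I (p : MvPolynomial (Fin 2) ℂ) :
    Continuous fun x : ℝ × ℝ => eval ![exp (x.1 * I), exp (x.2 * I)] p :=
  (continuous_eval p).comp <| continuous_pi fun i => by fin_cases i <;> simp <;> fun_prop

theorem intervalIntegral_intervalIntegral_swap_of_continuous {E : Type*}
    [NormedAddCommGroup E] [NormedSpace ℝ E] {F : ℝ → ℝ → E}
    (hF : Continuous (Function.uncurry F)) (a b c d : ℝ) :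
    ∫ x in a..b, ∫ y in c..d, F x y = ∫ y in c..d, ∫ x in a..b, F x y :=
  intervalIntegral_intervalIntegral_swap <|
    (hF.continuousOn.integrableOn_compact (isCompact_uIcc.prod isCompact_uIcc)).mono_set
      (prod_mono uIoc_subset_uIcc uIoc_subset_uIcc)

theorem fejer_riesz_eq_5_6b_general (n m : ℕ) (p revp : MvPolynomial (Fin 2) ℂ)
    (hp : ∀ z w : ℂ, ‖z‖ ≤ 1 → ‖w‖ ≤ 1 → eval ![z, w] p ≠ 0)
    (hrev : ∀ z w : ℂ, z ≠ 0 → w ≠ 0 →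
      eval ![z, w] revp =
        z ^ n * w ^ m *
          (starRingEnd ℂ) (eval ![1 / (starRingEnd ℂ) z, 1 / (starRingEnd ℂ) w] p))
    (k l : ℤ) (hk : k < (n : ℤ)) :
    (1 / (4 * (Real.pi : ℂ) ^ 2)) *
      ∫ θ : ℝ in (-Real.pi)..Real.pi, ∫ φ : ℝ in (-Real.pi)..Real.pi,
        eval ![Complex.exp ((θ : ℂ) * Complex.I),
               Complex.exp ((φ : ℂ) * Complex.I)] revp *
            Complex.exp (-(k : ℂ) * (θ : ℂ) * Complex.I) *
            Complex.exp (-(l : ℂ) * (φ : ℂ) * Complex.I) /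
          ((‖(eval ![Complex.exp ((θ : ℂ) * Complex.I),
                  Complex.exp ((φ : ℂ) * Complex.I)] p)‖ : ℂ)) ^ 2 = 0 := by
  obtain ⟨j, hj, hjk⟩ : ∃ j : ℕ, 0 < j ∧ (j : ℤ) = n - k :=
    ⟨(n - k : ℤ).toNat, by omega, by omega⟩
  have hp_torus : ∀ θ φ : ℝ, eval ![exp (θ * I), exp (φ * I)] p ≠ 0 := fun θ φ =>
    hp _ _ (norm_exp_ofReal_mul_I θ).le (norm_exp_ofReal_mul_I φ).le
  let F : ℝ → ℂ → ℂ := fun φ z =>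
    exp (φ * I) ^ m * exp (-l * φ * I) / eval ![z, exp (φ * I)] p
  have hF : ∀ φ : ℝ, DifferentiableOn ℂ (F φ) (closedBall 0 1) := fun φ =>
    (differentiableOn_const _).div (differentiable_eval_vecCons p _).differentiableOn
      fun z hz => hp z _ (mem_closedBall_zero_iff.1 hz) (norm_exp_ofReal_mul_I φ).le
  have hintegrand : ∀ θ φ : ℝ,
      eval ![exp (θ * I), exp (φ * I)] revp * exp (-k * θ * I) * exp (-l * φ * I) /
        (‖eval ![exp (θ * I), exp (φ * I)] p‖ : ℂ) ^ 2 =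
      exp (j * θ * I) * F φ (exp (θ * I)) := fun θ φ => by
    rw [mul_assoc, mul_div_right_comm, eval_reverse_div_sq_norm hrev (norm_exp_ofReal_mul_I θ)
      (norm_exp_ofReal_mul_I φ), ← exp_mul_I_pow_mul_exp_neg_mul_I hjk θ]
    ring
  have hcont :
      Continuous (Function.uncurry fun θ φ : ℝ => exp (j * θ * I) * F φ (exp (θ * I))) :=
    (by fun_prop : Continuous fun x : ℝ × ℝ => exp (j * x.1 * I)).mul <|
      (by fun_prop : Continuous fun x : ℝ × ℝ => exp (x.2 * I) ^ m * exp (-l * x.2 * I)).div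
        (continuous_eval_exp_mul_I p) fun x => hp_torus x.1 x.2
  rw [intervalIntegral.integral_congr fun θ _ =>
      intervalIntegral.integral_congr fun φ _ => hintegrand θ φ,
    intervalIntegral_intervalIntegral_swap_of_continuous hcont]
  simp only [integral_exp_nat_mul_mul_comp_exp_eq_zero (hF _) hj, intervalIntegral.integral_zero,
    mul_zero]

/-- **Fejér–Riesz paper, Lemma 5.1, equation (5.6b).**
Let `p ∈ ℂ[z,w]` be a polynomial of degree at most `(n,m)` which is stable (nonzero for
`|z| ≤ 1` and `|w| ≤ 1`), and let `revp` be its reverse polynomial, characterized by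
`revp(z,w) = zⁿwᵐ·conj(p(1/conj z, 1/conj w))` for `z, w ≠ 0`. Then for every integer
`k < n` and every `l ∈ ℤ`:
`(1/4π²)·∫∫_{[-π,π]²} revp(e^{iθ},e^{iφ})·e^{-ikθ}·e^{-ilφ} / |p(e^{iθ},e^{iφ})|² dθ dφ = 0`. -/
theorem fejer_riesz_eq_5_6b (n m : ℕ) (p revp : MvPolynomial (Fin 2) ℂ)
    (hdeg : ∀ d ∈ p.support, d 0 ≤ n ∧ d 1 ≤ m)
    (hp : ∀ z w : ℂ, ‖z‖ ≤ 1 → ‖w‖ ≤ 1 → eval ![z, w] p ≠ 0)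
    (hrev : ∀ z w : ℂ, z ≠ 0 → w ≠ 0 →
      eval ![z, w] revp =
        z ^ n * w ^ m *
          (starRingEnd ℂ) (eval ![1 / (starRingEnd ℂ) z, 1 / (starRingEnd ℂ) w] p))
    (k l : ℤ) (hk : k < (n : ℤ)) :
    (1 / (4 * (Real.pi : ℂ) ^ 2)) *
      ∫ θ : ℝ in (-Real.pi)..Real.pi, ∫ φ : ℝ in (-Real.pi)..Real.pi,
        eval ![Complex.exp ((θ : ℂ) * Complex.I),
               Complex.exp ((φ : ℂ) * Complex.I)] revp *
            Complex.exp (-(k : ℂ) * (θ : ℂ) * Complex.I) *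
            Complex.exp (-(l : ℂ) * (φ : ℂ) * Complex.I) /
          ((‖(eval ![Complex.exp ((θ : ℂ) * Complex.I),
                    Complex.exp ((φ : ℂ) * Complex.I)] p)‖ : ℂ)) ^ 2 = 0 :=
  fejer_riesz_eq_5_6b_general n m p revp hp hrev k l hk
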